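/- arXiv:2005.04471 — 6 statements merged into one kernel-verified Lean document; each statement's English description precedes it below -/
import Mathlib

section
/- Let A be a unital complex C*-algebra, β a *-endomorphism of A, H and L complex Hilbert spaces, π : A → B(H) a unital *-homomorphism, V ∈ B(H) with V*V = I and Vπ(a) = π(β(a))V for all a ∈ A, and T : L → H a bounded operator with T*T = I_L and TT* = π(β(1)) − VV*. Then the map φ : A → B(L) defined by φ(a) = T*π(β(a))T is a unital *-homomorphism: φ(1) = I_L, φ(ab) = φ(a)φ(b) for all a, b ∈ A, and φ(a*) = φ(a)* for all a ∈ A. -/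
/-!
Write `p = π(β 1)`. Covariance gives `V* p = V*`, so `V* T T* = V* p - V* V V* = 0`, whence
`V* T = V* T T* T = 0`: the ranges of `T` and `V` are orthogonal pieces of the range of `p`.
Since `V* π(β a) = π a V*`, the operator `π(β a) T` is also killed by `V V*`, while
`p π(β a) = π(β a)`; hence `T T* = p - V V*` fixes `π(β a) T`, and inserting `T T*` between
`π(β a)` and `π(β b)` yields multiplicativity. Likewise `p T = (T T* + V V*) T = T`, so
`T* p T = T* T = 1`.
-/

open ContinuousLinearMap

section Compression

variable {𝕜 H L : Type*} [RCLike 𝕜]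
  [NormedAddCommGroup H] [InnerProductSpace 𝕜 H] [CompleteSpace H]
  [NormedAddCommGroup L] [InnerProductSpace 𝕜 L] [CompleteSpace L]
  (T : L →L[𝕜] H)

theorem adjoint_comp_mul_comp (X Y : H →L[𝕜] H)
    (hY : (T ∘L adjoint T) ∘L (Y ∘L T) = Y ∘L T) :
    adjoint T ∘L ((X * Y) ∘L T) = (adjoint T ∘L (X ∘L T)) * (adjoint T ∘L (Y ∘L T)) :=
  calc adjoint T ∘L ((X * Y) ∘L T)
      = adjoint T ∘L (X ∘L ((T ∘L adjoint T) ∘L (Y ∘L T))) := by rw [hY]; rfl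
    _ = _ := rfl

theorem adjoint_comp_star_comp (X : H →L[𝕜] H) :
    adjoint T ∘L (star X ∘L T) = star (adjoint T ∘L (X ∘L T)) := by
  rw [star_eq_adjoint, star_eq_adjoint, adjoint_comp, adjoint_comp, adjoint_adjoint, comp_assoc]

variable {T}

theorem comp_eq_zero_of_comp_rangeProj_eq_zero {E : Type*} [NormedAddCommGroup E]
    [NormedSpace 𝕜 E] (hT : adjoint T ∘L T = 1) {S : H →L[𝕜] E}
    (hS : S ∘L (T ∘L adjoint T) = 0) : S ∘L T = 0 :=
  calc S ∘L T = (S ∘L (T ∘L adjoint T)) ∘L T := by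
        rw [comp_assoc, comp_assoc, hT, one_def, comp_id]
    _ = 0 := by rw [hS, zero_comp]

end Compression

section Covariant

variable {A : Type*} [CStarAlgebra A] {β : A →⋆ₙₐ[ℂ] A}
  {H : Type*} [NormedAddCommGroup H] [InnerProductSpace ℂ H] [CompleteSpace H]
  {π : A →⋆ₐ[ℂ] (H →L[ℂ] H)} {V : H →L[ℂ] H}

theorem star_mul_of_covariant (hcov : ∀ a : A, V * π a = π (β a) * V) (a : A) :
    star V * π (β a) = π a * star V := by
  simpa only [star_mul, ← map_star, star_star] using (congrArg star (hcov (star a))).symm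

variable {L : Type*} [NormedAddCommGroup L] [InnerProductSpace ℂ L] [CompleteSpace L]
  {T : L →L[ℂ] H}

theorem star_comp_eq_zero_of_covariant (hiso : star V * V = 1)
    (hcov : ∀ a : A, V * π a = π (β a) * V) (hT1 : adjoint T ∘L T = 1)
    (hT2 : T ∘L adjoint T = π (β 1) - V * star V) : star V ∘L T = 0 := by
  apply comp_eq_zero_of_comp_rangeProj_eq_zero hT1
  have hVp : star V * π (β 1) = star V := by
    simpa using star_mul_of_covariant hcov 1
  change star V * (T ∘L adjoint T) = 0
  rw [hT2, mul_sub, hVp, ← mul_assoc, hiso, one_mul, sub_self]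

theorem rangeProj_comp_map_comp_of_covariant (hiso : star V * V = 1)
    (hcov : ∀ a : A, V * π a = π (β a) * V) (hT1 : adjoint T ∘L T = 1)
    (hT2 : T ∘L adjoint T = π (β 1) - V * star V) (a : A) :
    (T ∘L adjoint T) ∘L (π (β a) ∘L T) = π (β a) ∘L T := by
  have hVT := star_comp_eq_zero_of_covariant hiso hcov hT1 hT2
  have hkill : (V * star V * π (β a)) ∘L T = 0 := by
    rw [mul_assoc, star_mul_of_covariant hcov, ← mul_assoc]
    change (V * π a) ∘L (star V ∘L T) = 0
    rw [hVT, comp_zero]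
  rw [hT2, ← comp_assoc, sub_comp]
  change (π (β 1) * π (β a) - V * star V * π (β a)) ∘L T = _
  rw [sub_comp, hkill, sub_zero, ← map_mul, ← map_mul, one_mul]

theorem map_one_comp_of_covariant (hiso : star V * V = 1)
    (hcov : ∀ a : A, V * π a = π (β a) * V) (hT1 : adjoint T ∘L T = 1)
    (hT2 : T ∘L adjoint T = π (β 1) - V * star V) : π (β 1) ∘L T = T := by
  have hVT := star_comp_eq_zero_of_covariant hiso hcov hT1 hT2
  rw [eq_add_of_sub_eq' hT2.symm, add_comp]
  change V ∘L (star V ∘L T) + T ∘L (adjoint T ∘L T) = T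
  rw [hVT, hT1, comp_zero, zero_add, one_def, comp_id]

end Covariant

/-- In the dilation construction, the compression `φ(a) = T* π(β(a)) T` to the
defect space is a unital *-homomorphism. -/
theorem stmt_8 {A : Type*} [CStarAlgebra A]
    (β : A →⋆ₙₐ[ℂ] A)
    {H L : Type*}
    [NormedAddCommGroup H] [InnerProductSpace ℂ H] [CompleteSpace H]
    [NormedAddCommGroup L] [InnerProductSpace ℂ L] [CompleteSpace L]
    (π : A →⋆ₐ[ℂ] (H →L[ℂ] H))
    (V : H →L[ℂ] H) (hiso : star V * V = 1)
    (hcov : ∀ a : A, V * π a = π (β a) * V)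
    (T : L →L[ℂ] H)
    (hT1 : adjoint T ∘L T = 1)
    (hT2 : T ∘L adjoint T = π (β 1) - V * star V) :
    (adjoint T ∘L (π (β 1) ∘L T) = 1) ∧
      (∀ a b : A, adjoint T ∘L (π (β (a * b)) ∘L T) =
        (adjoint T ∘L (π (β a) ∘L T)) * (adjoint T ∘L (π (β b) ∘L T))) ∧
      (∀ a : A, adjoint T ∘L (π (β (star a)) ∘L T) =
        star (adjoint T ∘L (π (β a) ∘L T))) := by
  refine ⟨?_, fun a b => ?_, fun a => ?_⟩
  · rw [map_one_comp_of_covariant hiso hcov hT1 hT2, hT1]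
  · rw [map_mul, map_mul]
    exact adjoint_comp_mul_comp T _ _ (rangeProj_comp_map_comp_of_covariant hiso hcov hT1 hT2 b)
  · rw [map_star, map_star]
    exact adjoint_comp_star_comp T _
end

section
/- In the dilation setting, for every p ∈ P the following hold: (i) T*V(p)*π(α_q(1))V(p)T = I_L, and (ii) V(p)*V(q)*V(p)T = 0. (These two identities express that the block operator V₁(p) = [[V(p), V(q)*V(p)T],[0, T*V(p)T]] on H ⊕ L is an isometry.) -/
open ContinuousLinearMap

theorem stmt_9 {A : Type*} [CStarAlgebra A]
    {P : Type*} [CommMonoid P]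
    (α : P → (A →⋆ₙₐ[ℂ] A))
    (hinj : ∀ p : P, Function.Injective (α p))
    (hcomp : ∀ (p r : P) (a : A), α p (α r a) = α (p * r) a)
    (haligned : ∀ p r : P, α p 1 * α r 1 = α r 1 * α p 1)
    (hhered : ∀ (p : P) (a : A), ∃ h : A, α p h = α p 1 * a * α p 1)
    {H L : Type*}
    [NormedAddCommGroup H] [InnerProductSpace ℂ H] [CompleteSpace H]
    [NormedAddCommGroup L] [InnerProductSpace ℂ L] [CompleteSpace L]
    (π : A →⋆ₐ[ℂ] (H →L[ℂ] H))
    (V : P →* (H →L[ℂ] H))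
    (hiso : ∀ p : P, star (V p) * V p = 1)
    (hcov : ∀ (p : P) (a : A), V p * π a = π (α p a) * V p)
    (q : P) (T : L →L[ℂ] H)
    (hT1 : adjoint T ∘L T = 1)
    (hT2 : T ∘L adjoint T = π (α q 1) - V q * star (V q)) :
    ∀ p : P,
      adjoint T ∘L ((star (V p) * π (α q 1) * V p) ∘L T) = 1 ∧
      (star (V p) * star (V q) * V p) ∘L T = 0 := by
  intro p
  -- π(α q 1) is a self-adjoint idempotent
  have hsa : ∀ a : A, star (α q a) = α q (star a) := fun a => (map_star (α q) a).symm
  have hq1sa : star ((α q) 1) = (α q) 1 := by rw [← map_star]; simp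
  have hq1idem : (α q) 1 * (α q) 1 = (α q) 1 := by rw [← map_mul, mul_one]
  -- π(α q 1) * V q = V q
  have hπVq : π ((α q) 1) * V q = V q := by
    have h := hcov q 1
    rw [map_one, mul_one] at h
    exact h.symm
  -- star (V q) * π (α q 1) = star (V q)
  have hVqπ : star (V q) * π ((α q) 1) = star (V q) := by
    have := congrArg star hπVq
    rwa [star_mul, ← map_star π, hq1sa] at this
  -- T T* as an endomorphism
  have hSVq : star (V q) * (T ∘L adjoint T) = 0 := by
    rw [hT2, mul_sub, hVqπ, ← mul_assoc, hiso, one_mul, sub_self]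
  -- T = (T ∘L adjoint T) ∘L T
  have hTfact : (T ∘L adjoint T) ∘L T = T := by
    rw [comp_assoc, hT1]; ext x; simp
  -- star (V q) ∘L T = 0
  have hVqT : star (V q) ∘L T = 0 := by
    calc star (V q) ∘L T = star (V q) ∘L ((T ∘L adjoint T) ∘L T) := by rw [hTfact]
    _ = (star (V q) * (T ∘L adjoint T)) ∘L T := by simp only [mul_def, comp_assoc]
    _ = 0 := by rw [hSVq]; ext x; simp
  -- π(α q 1) ∘L T = T
  have hπq1S : π ((α q) 1) * (T ∘L adjoint T) = T ∘L adjoint T := by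
    rw [hT2, mul_sub, ← map_mul, hq1idem, ← mul_assoc, hπVq]
  have hπqT : π ((α q) 1) ∘L T = T := by
    calc π ((α q) 1) ∘L T = π ((α q) 1) ∘L ((T ∘L adjoint T) ∘L T) := by rw [hTfact]
    _ = (π ((α q) 1) * (T ∘L adjoint T)) ∘L T := by simp only [mul_def, comp_assoc]
    _ = T := by rw [hπq1S, hTfact]
  -- covariance at (p, α q 1)
  have hcovp : V p * π ((α q) 1) = π ((α (p * q)) 1) * V p := by
    rw [hcov p ((α q) 1), hcomp]
  have hpq1sa : star ((α (p * q)) 1) = (α (p * q)) 1 := by rw [← map_star]; simp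
  have hcovpstar : π ((α q) 1) * star (V p) = star (V p) * π ((α (p * q)) 1) := by
    have := congrArg star hcovp
    rwa [star_mul, star_mul, ← map_star π, ← map_star π, hq1sa, hpq1sa] at this
  -- π(α q 1) * V p * (T∘L T*) = π(α (p*q) 1) * V p - V p * V q * star (V q)
  have hA : π ((α q) 1) * V p * (T ∘L adjoint T)
      = π ((α (p * q)) 1) * V p - V p * V q * star (V q) := by
    rw [hT2, mul_sub]
    congr 1
    · -- π(α q 1) * V p * π(α q 1) = π(α(p*q)1) * V p
      rw [mul_assoc, hcovp, ← mul_assoc, ← map_mul]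
      congr 2
      -- α q 1 * α (p*q) 1 = α (p*q) 1
      have : (α (p * q)) 1 = (α q) ((α p) 1) := by rw [hcomp, mul_comm p q]
      rw [this, ← map_mul, one_mul]
    · -- π(α q 1) * V p * (V q * star V q) = V p * V q * star V q
      rw [← mul_assoc, mul_assoc (π ((α q) 1)) (V p) (V q), ← map_mul, mul_comm p q,
        map_mul, ← mul_assoc, hπVq]
  -- hence π(α q 1) ∘L (V p ∘L T) = π(α(p*q)1) ∘L (V p ∘L T)
  have hB : (π ((α q) 1) * V p) ∘L T = (π ((α (p * q)) 1) * V p) ∘L T := by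
    calc (π ((α q) 1) * V p) ∘L T = (π ((α q) 1) * V p) ∘L ((T ∘L adjoint T) ∘L T) := by
          rw [hTfact]
    _ = (π ((α q) 1) * V p * (T ∘L adjoint T)) ∘L T := by simp only [mul_def, comp_assoc]
    _ = (π ((α (p * q)) 1) * V p - V p * V q * star (V q)) ∘L T := by rw [hA]
    _ = (π ((α (p * q)) 1) * V p) ∘L T - (V p * V q) ∘L (star (V q) ∘L T) := by
          rw [sub_comp]; simp only [mul_def, comp_assoc]
    _ = (π ((α (p * q)) 1) * V p) ∘L T := by rw [hVqT]; simp
  constructor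
  · -- (i)
    have : (star (V p) * π ((α q) 1) * V p) ∘L T = T := by
      calc (star (V p) * π ((α q) 1) * V p) ∘L T
          = star (V p) ∘L ((π ((α q) 1) * V p) ∘L T) := by
            simp only [mul_def, comp_assoc]
      _ = star (V p) ∘L ((π ((α (p * q)) 1) * V p) ∘L T) := by rw [hB]
      _ = (star (V p) * π ((α (p * q)) 1) * V p) ∘L T := by
            simp only [mul_def, comp_assoc]
      _ = (π ((α q) 1) * (star (V p) * V p)) ∘L T := by rw [← hcovpstar, mul_assoc]
      _ = π ((α q) 1) ∘L T := by rw [hiso, mul_one]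
      _ = T := hπqT
    rw [this, hT1]
  · -- (ii): star (V p) * star (V q) * V p = star (V q)
    have hkey : star (V p) * star (V q) * V p = star (V q) := by
      have h1 : star (star (V p) * star (V q) * V p) = V q := by
        rw [star_mul, star_mul, star_star, star_star]
        rw [← map_mul, mul_comm q p, map_mul, ← mul_assoc, hiso, one_mul]
      calc star (V p) * star (V q) * V p
          = star (star (star (V p) * star (V q) * V p)) := by rw [star_star]
      _ = star (V q) := by rw [h1]
    rw [hkey, hVqT]
end

section
/- In the dilation setting, for all p, r ∈ P the following hold: (i) V(p)V(q)*V(r)T + V(q)*V(p)TT*V(r)T = V(q)*V(pr)T, and (ii) (T*V(p)T)(T*V(r)T) = T*V(pr)T. (These identities express that p ↦ V₁(p) = [[V(p), V(q)*V(p)T],[0, T*V(p)T]] is multiplicative on H ⊕ L.) -/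
/-!
Write `E p = π (α p 1)` for the range projection of `V p`. Since `T T* = E q - V q (V q)*` and
`E q` fixes every `V r T` (as `V r E q = E (r q) V r` and `E (r q) ≤ E q`), one gets
`T T* V r T = (1 - V q (V q)*) V r T`. Substituting this into
both identities, the extra terms cancel because `(V q)* V p V q = V p` in (i) and because
`T* V q = 0` in (ii).
-/

open ContinuousLinearMap

namespace CovariantRep

section Covariance

variable {A : Type*} [Semiring A] [StarRing A] [Algebra ℂ A]
  {P : Type*} [CommMonoid P] {α : P → (A →⋆ₙₐ[ℂ] A)}
  {H : Type*} [NormedAddCommGroup H] [InnerProductSpace ℂ H] [CompleteSpace H]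
  {π : A →⋆ₐ[ℂ] (H →L[ℂ] H)} {V : P →* (H →L[ℂ] H)}

theorem proj_mul_V (hcov : ∀ (p : P) (a : A), V p * π a = π (α p a) * V p) (p : P) :
    π (α p 1) * V p = V p := by
  simpa using (hcov p 1).symm

theorem star_V_mul_proj (hcov : ∀ (p : P) (a : A), V p * π a = π (α p a) * V p) (p : P) :
    star (V p) * π (α p 1) = star (V p) := by
  have hsa : IsSelfAdjoint (π (α p 1)) := ((IsSelfAdjoint.one A).map (α p)).map π
  simpa [hsa.star_eq] using congrArg star (proj_mul_V hcov p)

theorem proj_mul_V_mul_proj (hcomp : ∀ (p r : P) (a : A), α p (α r a) = α (p * r) a)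
    (hcov : ∀ (p : P) (a : A), V p * π a = π (α p a) * V p) (q s : P) :
    π (α q 1) * V s * π (α q 1) = V s * π (α q 1) := by
  have hshift : V s * π (α q 1) = π (α (s * q) 1) * V s := by rw [hcov, hcomp]
  have hle : π (α q 1) * π (α (s * q) 1) = π (α (s * q) 1) := by
    rw [← map_mul, mul_comm s q, ← hcomp, ← map_mul, one_mul]
  rw [mul_assoc, hshift, ← mul_assoc, hle]

end Covariance

theorem mul_mul_eq_of_mul_eq_one_of_commute {M : Type*} [Monoid M] {u u' v : M}
    (hu : u' * u = 1) (huv : Commute u v) : u' * v * u = v := by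
  rw [mul_assoc, ← huv.eq, ← mul_assoc, hu, one_mul]

section Wandering

variable {H L : Type*}
  [NormedAddCommGroup H] [InnerProductSpace ℂ H] [CompleteSpace H]
  [NormedAddCommGroup L] [InnerProductSpace ℂ L] [CompleteSpace L]
  {E W : H →L[ℂ] H} {T : L →L[ℂ] H}

theorem comp_adjoint_comp_self (hT1 : adjoint T ∘L T = 1) : (T ∘L adjoint T) ∘L T = T := by
  rw [comp_assoc, hT1, one_def, comp_id]

variable (hT1 : adjoint T ∘L T = 1) (hT2 : T ∘L adjoint T = E - W * star W)
  (hWE : star W * E = star W) (hW : star W * W = 1)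
include hT1 hT2 hWE hW

theorem star_comp_eq_zero : star W ∘L T = 0 := by
  have hWP : star W * (E - W * star W) = 0 := by
    rw [mul_sub, hWE, ← mul_assoc, hW, one_mul, sub_self]
  calc star W ∘L T = (star W * (T ∘L adjoint T)) ∘L T := by
        rw [mul_def, comp_assoc, comp_adjoint_comp_self hT1]
    _ = 0 := by rw [hT2, hWP, zero_comp]

theorem adjoint_comp_eq_zero : adjoint T ∘L W = 0 := by
  simpa [adjoint_comp, ← star_eq_adjoint] using
    congrArg adjoint (star_comp_eq_zero hT1 hT2 hWE hW)

theorem proj_comp_eq : E ∘L T = T :=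
  calc E ∘L T = (T ∘L adjoint T + W * star W) ∘L T := by rw [hT2, sub_add_cancel]
    _ = T := by
      rw [add_comp, comp_adjoint_comp_self hT1, mul_def, comp_assoc,
        star_comp_eq_zero hT1 hT2 hWE hW, comp_zero, add_zero]

theorem comp_adjoint_comp_eq_of_proj {X : H →L[ℂ] H} (hX : E * X * E = X * E) :
    T ∘L adjoint T ∘L X ∘L T = X ∘L T - W ∘L star W ∘L X ∘L T := by
  have hEX : E ∘L X ∘L T = X ∘L T := by
    simpa only [mul_def, comp_assoc, proj_comp_eq hT1 hT2 hWE hW] using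
      congrArg (fun Y : H →L[ℂ] H => Y ∘L T) hX
  rw [← comp_assoc, hT2, sub_comp, hEX, mul_def, comp_assoc]

end Wandering

end CovariantRep

open CovariantRep in
theorem stmt_10_general {A : Type*} [CStarAlgebra A]
    {P : Type*} [CommMonoid P]
    (α : P → (A →⋆ₙₐ[ℂ] A))
    (hcomp : ∀ (p r : P) (a : A), α p (α r a) = α (p * r) a)
    {H L : Type*}
    [NormedAddCommGroup H] [InnerProductSpace ℂ H] [CompleteSpace H]
    [NormedAddCommGroup L] [InnerProductSpace ℂ L] [CompleteSpace L]
    (π : A →⋆ₐ[ℂ] (H →L[ℂ] H))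
    (V : P →* (H →L[ℂ] H))
    (hiso : ∀ p : P, star (V p) * V p = 1)
    (hcov : ∀ (p : P) (a : A), V p * π a = π (α p a) * V p)
    (q : P) (T : L →L[ℂ] H)
    (hT1 : adjoint T ∘L T = 1)
    (hT2 : T ∘L adjoint T = π (α q 1) - V q * star (V q)) :
    ∀ p r : P,
      (V p * star (V q) * V r) ∘L T +
          (star (V q) * V p * (T ∘L adjoint T) * V r) ∘L T =
        (star (V q) * V (p * r)) ∘L T ∧
      (adjoint T ∘L (V p ∘L T)) ∘L (adjoint T ∘L (V r ∘L T)) =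
        adjoint T ∘L (V (p * r) ∘L T) := by
  intro p r
  have hWE := star_V_mul_proj hcov q
  have hVcomm : Commute (V q) (V p) := (Commute.all q p).map V
  have hTT : T ∘L adjoint T ∘L V r ∘L T = V r ∘L T - V q ∘L star (V q) ∘L V r ∘L T :=
    comp_adjoint_comp_eq_of_proj hT1 hT2 hWE (hiso q) (proj_mul_V_mul_proj hcomp hcov q r)
  simp only [mul_def, comp_assoc, map_mul]
  constructor
  · have hcancel : star (V q) ∘L V p ∘L V q ∘L star (V q) ∘L V r ∘L T =
        V p ∘L star (V q) ∘L V r ∘L T := by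
      simpa only [mul_def, comp_assoc] using
        congrArg (fun X : H →L[ℂ] H => X ∘L star (V q) ∘L V r ∘L T)
          (mul_mul_eq_of_mul_eq_one_of_commute (hiso q) hVcomm)
    rw [hTT, comp_sub, comp_sub, hcancel]
    abel
  · have hswap : V p ∘L V q ∘L star (V q) ∘L V r ∘L T =
        V q ∘L V p ∘L star (V q) ∘L V r ∘L T := by
      simpa only [mul_def, comp_assoc] using
        congrArg (fun X : H →L[ℂ] H => X ∘L star (V q) ∘L V r ∘L T) hVcomm.eq.symm
    rw [hTT, comp_sub, comp_sub, hswap, ← comp_assoc (adjoint T) (V q),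
      adjoint_comp_eq_zero hT1 hT2 hWE (hiso q), zero_comp, sub_zero]

theorem stmt_10 {A : Type*} [CStarAlgebra A]
    {P : Type*} [CommMonoid P]
    (α : P → (A →⋆ₙₐ[ℂ] A))
    (hinj : ∀ p : P, Function.Injective (α p))
    (hcomp : ∀ (p r : P) (a : A), α p (α r a) = α (p * r) a)
    (haligned : ∀ p r : P, α p 1 * α r 1 = α r 1 * α p 1)
    (hhered : ∀ (p : P) (a : A), ∃ h : A, α p h = α p 1 * a * α p 1)
    {H L : Type*}
    [NormedAddCommGroup H] [InnerProductSpace ℂ H] [CompleteSpace H]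
    [NormedAddCommGroup L] [InnerProductSpace ℂ L] [CompleteSpace L]
    (π : A →⋆ₐ[ℂ] (H →L[ℂ] H))
    (V : P →* (H →L[ℂ] H))
    (hiso : ∀ p : P, star (V p) * V p = 1)
    (hcov : ∀ (p : P) (a : A), V p * π a = π (α p a) * V p)
    (q : P) (T : L →L[ℂ] H)
    (hT1 : adjoint T ∘L T = 1)
    (hT2 : T ∘L adjoint T = π (α q 1) - V q * star (V q)) :
    ∀ p r : P,
      (V p * star (V q) * V r) ∘L T +
          (star (V q) * V p * (T ∘L adjoint T) * V r) ∘L T =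
        (star (V q) * V (p * r)) ∘L T ∧
      (adjoint T ∘L (V p ∘L T)) ∘L (adjoint T ∘L (V r ∘L T)) =
        adjoint T ∘L (V (p * r) ∘L T) :=
  stmt_10_general α hcomp π V hiso hcov q T hT1 hT2
end

section
/- In the dilation setting, for all p ∈ P and a ∈ A the following hold: (i) V(q)*V(p)TT*π(α_q(a))T = π(α_p(a))V(q)*V(p)T, and (ii) (T*V(p)T)(T*π(α_q(a))T) = (T*π(α_{qp}(a))T)(T*V(p)T), and both sides of (ii) equal T*π(α_{pq}(a))V(p)T. (These identities express the right covariance V₁(p)π₁(a) = π₁(α_p(a))V₁(p) of the dilated pair π₁(a) = π(a) ⊕ T*π(α_q(a))T, V₁(p) = [[V(p), V(q)*V(p)T],[0, T*V(p)T]].) -/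
open ContinuousLinearMap

/-!
Since `T` is an isometry, `E = T T* = π(α_q 1) - V_q V_q*` fixes `T`, and then `V_q* E = 0` gives
`V_q* T = 0`. Hence, on the range of `T`, `E π(α_q a) = π(α_q a) - V_q π(a) V_q*` acts as
`π(α_q a)`, and dually `T* π(α_q b) E = T* π(α_q b)`. With these the projection `E` can be
erased from both sides of each identity, which then reduce to the covariance relations of `(π, V)`.
-/

section Defect

variable {A : Type*} [CStarAlgebra A]
  {H L : Type*} [NormedAddCommGroup H] [InnerProductSpace ℂ H] [CompleteSpace H]
  [NormedAddCommGroup L] [InnerProductSpace ℂ L] [CompleteSpace L]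
  {π : A →⋆ₐ[ℂ] (H →L[ℂ] H)} {β : A →⋆ₙₐ[ℂ] A} {W : H →L[ℂ] H}
  {T : L →L[ℂ] H}

theorem star_mul_map_of_covariant (hW : ∀ a, W * π a = π (β a) * W) (a : A) :
    star W * π (β a) = π a * star W := by
  simpa [star_mul, map_star] using (congrArg star (hW (star a))).symm

variable (hW : ∀ a, W * π a = π (β a) * W) (hWiso : star W * W = 1)
  (hT1 : adjoint T ∘L T = 1) (hT2 : T ∘L adjoint T = π (β 1) - W * star W)
include hW hWiso hT1 hT2

theorem star_comp_eq_zero_of_defect : star W ∘L T = 0 := by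
  have : star W * (T ∘L adjoint T) = 0 := by
    rw [hT2, mul_sub, star_mul_map_of_covariant hW, ← mul_assoc, hWiso, map_one, one_mul,
      sub_self]
  have hT : (T ∘L adjoint T) ∘L T = T := by rw [comp_assoc, hT1, one_def, comp_id]
  rw [← hT, ← comp_assoc]
  exact congrArg (· ∘L T) this |>.trans (zero_comp T)

theorem adjoint_comp_eq_zero_of_defect : adjoint T ∘L W = 0 := by
  simpa [adjoint_comp, star_eq_adjoint] using congrArg adjoint
    (star_comp_eq_zero_of_defect hW hWiso hT1 hT2)

theorem defect_mul_map_comp (a : A) :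
    ((T ∘L adjoint T) * π (β a)) ∘L T = π (β a) ∘L T := by
  have hE : (T ∘L adjoint T) * π (β a) = π (β a) - W * π a * star W := by
    rw [hT2, sub_mul, ← map_mul, ← map_mul, one_mul, mul_assoc W, star_mul_map_of_covariant hW,
      ← mul_assoc]
  rw [hE, sub_comp, mul_def (W * π a), comp_assoc, star_comp_eq_zero_of_defect hW hWiso hT1 hT2,
    comp_zero, sub_zero]

theorem adjoint_comp_map_mul_defect (a : A) :
    adjoint T ∘L (π (β a) * (T ∘L adjoint T)) = adjoint T ∘L π (β a) := by
  have hE : π (β a) * (T ∘L adjoint T) = π (β a) - W * π a * star W := by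
    rw [hT2, mul_sub, ← map_mul, ← map_mul, mul_one, ← mul_assoc, ← hW]
  rw [hE, comp_sub, mul_assoc, mul_def W, ← comp_assoc,
    adjoint_comp_eq_zero_of_defect hW hWiso hT1 hT2, zero_comp, sub_zero]

end Defect

theorem stmt_11_general {A : Type*} [CStarAlgebra A]
    {P : Type*} [CommMonoid P]
    (α : P → (A →⋆ₙₐ[ℂ] A))
    (hcomp : ∀ (p r : P) (a : A), α p (α r a) = α (p * r) a)
    {H L : Type*}
    [NormedAddCommGroup H] [InnerProductSpace ℂ H] [CompleteSpace H]
    [NormedAddCommGroup L] [InnerProductSpace ℂ L] [CompleteSpace L]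
    (π : A →⋆ₐ[ℂ] (H →L[ℂ] H))
    (V : P →* (H →L[ℂ] H))
    (hiso : ∀ p : P, star (V p) * V p = 1)
    (hcov : ∀ (p : P) (a : A), V p * π a = π (α p a) * V p)
    (q : P) (T : L →L[ℂ] H)
    (hT1 : adjoint T ∘L T = 1)
    (hT2 : T ∘L adjoint T = π (α q 1) - V q * star (V q)) :
    ∀ (p : P) (a : A),
      (star (V q) * V p * (T ∘L adjoint T) * π (α q a)) ∘L T =
          (π (α p a) * star (V q) * V p) ∘L T ∧
      (adjoint T ∘L (V p ∘L T)) ∘L (adjoint T ∘L (π (α q a) ∘L T)) =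
          (adjoint T ∘L (π (α (q * p) a) ∘L T)) ∘L (adjoint T ∘L (V p ∘L T)) ∧
      (adjoint T ∘L (V p ∘L T)) ∘L (adjoint T ∘L (π (α q a) ∘L T)) =
          adjoint T ∘L ((π (α (p * q) a) * V p) ∘L T) := by
  intro p a
  have hα : α p (α q a) = α q (α p a) := by rw [hcomp, hcomp, mul_comm]
  have hcompress : ∀ S : H →L[ℂ] H,
      (S * (T ∘L adjoint T) * π (α q a)) ∘L T = (S * π (α q a)) ∘L T :=
    fun S => congrArg (S ∘L ·) (defect_mul_map_comp (hcov q) (hiso q) hT1 hT2 a)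
  have hiii : (adjoint T ∘L (V p ∘L T)) ∘L (adjoint T ∘L (π (α q a) ∘L T)) =
      adjoint T ∘L ((π (α (p * q) a) * V p) ∘L T) :=
    calc _ = adjoint T ∘L ((V p * (T ∘L adjoint T) * π (α q a)) ∘L T) := rfl
      _ = _ := by rw [hcompress, hcov, hcomp]
  refine ⟨?_, ?_, hiii⟩
  · rw [hcompress, mul_assoc, hcov, hα, ← mul_assoc, star_mul_map_of_covariant (hcov q)]
  · calc _ = adjoint T ∘L ((π (α (p * q) a) * V p) ∘L T) := hiii
      _ = (adjoint T ∘L (π (α q (α p a)) * (T ∘L adjoint T))) ∘L (V p ∘L T) := by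
        rw [adjoint_comp_map_mul_defect (hcov q) (hiso q) hT1 hT2, ← hcomp, hα]; rfl
      _ = _ := by rw [hcomp, mul_comm]; rfl

theorem stmt_11 {A : Type*} [CStarAlgebra A]
    {P : Type*} [CommMonoid P]
    (α : P → (A →⋆ₙₐ[ℂ] A))
    (hinj : ∀ p : P, Function.Injective (α p))
    (hcomp : ∀ (p r : P) (a : A), α p (α r a) = α (p * r) a)
    (haligned : ∀ p r : P, α p 1 * α r 1 = α r 1 * α p 1)
    (hhered : ∀ (p : P) (a : A), ∃ h : A, α p h = α p 1 * a * α p 1)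
    {H L : Type*}
    [NormedAddCommGroup H] [InnerProductSpace ℂ H] [CompleteSpace H]
    [NormedAddCommGroup L] [InnerProductSpace ℂ L] [CompleteSpace L]
    (π : A →⋆ₐ[ℂ] (H →L[ℂ] H))
    (V : P →* (H →L[ℂ] H))
    (hiso : ∀ p : P, star (V p) * V p = 1)
    (hcov : ∀ (p : P) (a : A), V p * π a = π (α p a) * V p)
    (q : P) (T : L →L[ℂ] H)
    (hT1 : adjoint T ∘L T = 1)
    (hT2 : T ∘L adjoint T = π (α q 1) - V q * star (V q)) :
    ∀ (p : P) (a : A),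
      (star (V q) * V p * (T ∘L adjoint T) * π (α q a)) ∘L T =
          (π (α p a) * star (V q) * V p) ∘L T ∧
      (adjoint T ∘L (V p ∘L T)) ∘L (adjoint T ∘L (π (α q a) ∘L T)) =
          (adjoint T ∘L (π (α (q * p) a) ∘L T)) ∘L (adjoint T ∘L (V p ∘L T)) ∧
      (adjoint T ∘L (V p ∘L T)) ∘L (adjoint T ∘L (π (α q a) ∘L T)) =
          adjoint T ∘L ((π (α (p * q) a) * V p) ∘L T) :=
  stmt_11_general α hcomp π V hiso hcov q T hT1 hT2
end

section
/- In the dilation setting, let p ∈ P additionally satisfy V(p)V(p)* = π(α_p(1)). Then: (i) V(q)*V(p)TT*V(p)*V(q) = 0, (ii) V(q)*V(p)TT*V(p)*T = 0, and (iii) (T*V(p)T)(T*V(p)*T) = T*π(α_{qp}(1))T. (These identities express that V₁(p)V₁(p)* = π₁(α_p(1)) for the dilated pair π₁(a) = π(a) ⊕ T*π(α_q(a))T, V₁(p) = [[V(p), V(q)*V(p)T],[0, T*V(p)T]].) -/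
/-!
Write `E_r = π(α_r 1) - V_r V_r*` for the defect of `V_r`, so that `TT* = E_q`.
Covariance and `α_p(α_q 1) α_p(1) = α_p(α_q 1)` give `V_p E_q V_p* = E_{qp}`, and moving `V_q*`
through `E_{qp}` with the isometry relation gives `V_q* E_{qp} = E_p V_q*`. The hypothesis on `p`
says `E_p = 0`, which yields (i) and (ii); for (iii) it remains to note that `V_q* T = 0`, because
`V_q*` kills the range of `E_q`.
-/

open ContinuousLinearMap

section Covariance

variable {A B P : Type*} [Ring A] [StarRing A] [Algebra ℂ A] [Ring B] [StarRing B] [Algebra ℂ B]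
  [CommMonoid P]
  (α : P → (A →⋆ₙₐ[ℂ] A)) (π : A →⋆ₐ[ℂ] B) (V : P →* B)

noncomputable def rangeDefect (r : P) : B := π (α r 1) - V r * star (V r)

variable {α π V}

lemma star_mul_map_of_covariant_s12 (hcov : ∀ (p : P) (a : A), V p * π a = π (α p a) * V p)
    (p : P) (a : A) : star (V p) * π (α p a) = π a * star (V p) := by
  have h := congrArg star (hcov p (star a))
  rw [star_mul, star_mul, ← map_star π, ← map_star π, star_star, ← map_star (α p),
    star_star] at h
  exact h.symm

lemma star_mul_rangeDefect_self (hcov : ∀ (p : P) (a : A), V p * π a = π (α p a) * V p)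
    {q : P} (hq : star (V q) * V q = 1) : star (V q) * rangeDefect α π V q = 0 := by
  rw [rangeDefect, mul_sub, ← mul_assoc, hq, one_mul, star_mul_map_of_covariant_s12 hcov, map_one,
    one_mul, sub_self]

lemma mul_rangeDefect_mul_star (hcomp : ∀ (p r : P) (a : A), α p (α r a) = α (p * r) a)
    (hcov : ∀ (p : P) (a : A), V p * π a = π (α p a) * V p)
    {p : P} (hp : V p * star (V p) = π (α p 1)) (q : P) :
    V p * rangeDefect α π V q * star (V p) = rangeDefect α π V (q * p) := by
  have hproj : V p * π (α q 1) * star (V p) = π (α (q * p) 1) := by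
    rw [hcov, mul_assoc, hp, ← map_mul, ← map_mul, mul_one, hcomp, mul_comm p q]
  have hrange : V p * (V q * star (V q)) * star (V p) = V (q * p) * star (V (q * p)) := by
    rw [mul_comm q p, map_mul, star_mul]
    noncomm_ring
  rw [rangeDefect, rangeDefect, mul_sub, sub_mul, hproj, hrange]

lemma star_mul_rangeDefect_mul (hcomp : ∀ (p r : P) (a : A), α p (α r a) = α (p * r) a)
    (hcov : ∀ (p : P) (a : A), V p * π a = π (α p a) * V p)
    {q : P} (hq : star (V q) * V q = 1) (p : P) :
    star (V q) * rangeDefect α π V (q * p) = rangeDefect α π V p * star (V q) := by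
  have hproj : star (V q) * π (α (q * p) 1) = π (α p 1) * star (V q) := by
    rw [← hcomp, star_mul_map_of_covariant_s12 hcov]
  have hrange : star (V q) * (V (q * p) * star (V (q * p))) = V p * star (V p) * star (V q) := by
    rw [map_mul, star_mul]
    simp only [← mul_assoc]
    rw [hq, one_mul]
  rw [rangeDefect, rangeDefect, mul_sub, sub_mul, hproj, hrange]

end Covariance

theorem stmt_12_general {A : Type*} [CStarAlgebra A]
    {P : Type*} [CommMonoid P]
    (α : P → (A →⋆ₙₐ[ℂ] A))
    (hcomp : ∀ (p r : P) (a : A), α p (α r a) = α (p * r) a)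
    {H L : Type*}
    [NormedAddCommGroup H] [InnerProductSpace ℂ H] [CompleteSpace H]
    [NormedAddCommGroup L] [InnerProductSpace ℂ L] [CompleteSpace L]
    (π : A →⋆ₐ[ℂ] (H →L[ℂ] H))
    (V : P →* (H →L[ℂ] H))
    (hiso : ∀ p : P, star (V p) * V p = 1)
    (hcov : ∀ (p : P) (a : A), V p * π a = π (α p a) * V p)
    (q : P) (T : L →L[ℂ] H)
    (hT1 : adjoint T ∘L T = 1)
    (hT2 : T ∘L adjoint T = π (α q 1) - V q * star (V q)) :
    ∀ p : P, V p * star (V p) = π (α p 1) →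
      star (V q) * V p * (T ∘L adjoint T) * star (V p) * V q = 0 ∧
      (star (V q) * V p * (T ∘L adjoint T) * star (V p)) ∘L T = 0 ∧
      (adjoint T ∘L (V p ∘L T)) ∘L (adjoint T ∘L (star (V p) ∘L T)) =
        adjoint T ∘L (π (α (q * p) 1) ∘L T) := by
  intro p hp
  have hE : T ∘L adjoint T = rangeDefect α π V q := hT2
  have hconj : V p * (T ∘L adjoint T) * star (V p) = rangeDefect α π V (q * p) := by
    rw [hE, mul_rangeDefect_mul_star hcomp hcov hp]
  have hX : star (V q) * V p * (T ∘L adjoint T) * star (V p) = 0 := by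
    rw [show star (V q) * V p * (T ∘L adjoint T) * star (V p) =
        star (V q) * (V p * (T ∘L adjoint T) * star (V p)) by simp only [mul_assoc],
      hconj, star_mul_rangeDefect_mul hcomp hcov (hiso q), rangeDefect, hp, sub_self, zero_mul]
  have hVqT : star (V q) ∘L T = 0 := by
    calc star (V q) ∘L T = (star (V q) * (T ∘L adjoint T)) ∘L T := by
          rw [mul_def, comp_assoc, comp_assoc, hT1]; rfl
      _ = 0 := by rw [hE, star_mul_rangeDefect_self hcov (hiso q), zero_comp]
  have hVqpT : star (V (q * p)) ∘L T = 0 := by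
    rw [map_mul, star_mul, mul_def, comp_assoc, hVqT, comp_zero]
  refine ⟨by rw [hX, zero_mul], by rw [hX, zero_comp], ?_⟩
  calc (adjoint T ∘L (V p ∘L T)) ∘L (adjoint T ∘L (star (V p) ∘L T))
      = adjoint T ∘L ((V p * (T ∘L adjoint T) * star (V p)) ∘L T) := rfl
    _ = adjoint T ∘L (π (α (q * p) 1) ∘L T) := by
      rw [hconj, rangeDefect, sub_comp, comp_sub, mul_def (V (q * p)), comp_assoc, hVqpT,
        comp_zero, comp_zero, sub_zero]

theorem stmt_12 {A : Type*} [CStarAlgebra A]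
    {P : Type*} [CommMonoid P]
    (α : P → (A →⋆ₙₐ[ℂ] A))
    (hinj : ∀ p : P, Function.Injective (α p))
    (hcomp : ∀ (p r : P) (a : A), α p (α r a) = α (p * r) a)
    (haligned : ∀ p r : P, α p 1 * α r 1 = α r 1 * α p 1)
    (hhered : ∀ (p : P) (a : A), ∃ h : A, α p h = α p 1 * a * α p 1)
    {H L : Type*}
    [NormedAddCommGroup H] [InnerProductSpace ℂ H] [CompleteSpace H]
    [NormedAddCommGroup L] [InnerProductSpace ℂ L] [CompleteSpace L]
    (π : A →⋆ₐ[ℂ] (H →L[ℂ] H))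
    (V : P →* (H →L[ℂ] H))
    (hiso : ∀ p : P, star (V p) * V p = 1)
    (hcov : ∀ (p : P) (a : A), V p * π a = π (α p a) * V p)
    (q : P) (T : L →L[ℂ] H)
    (hT1 : adjoint T ∘L T = 1)
    (hT2 : T ∘L adjoint T = π (α q 1) - V q * star (V q)) :
    ∀ p : P, V p * star (V p) = π (α p 1) →
      star (V q) * V p * (T ∘L adjoint T) * star (V p) * V q = 0 ∧
      (star (V q) * V p * (T ∘L adjoint T) * star (V p)) ∘L T = 0 ∧
      (adjoint T ∘L (V p ∘L T)) ∘L (adjoint T ∘L (star (V p) ∘L T)) =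
        adjoint T ∘L (π (α (q * p) 1) ∘L T) :=
  stmt_12_general α hcomp π V hiso hcov q T hT1 hT2
end

section
/- Let B be a unital complex C*-algebra, R a commutative ring, and U : R → B a map with U(0) = 1, U(x + y) = U(x)U(y), and U(x)* = U(−x) for all x, y ∈ R (so each U(x) is a unitary). Let 𝒮 be a collection of additive subgroups of R such that for all N, M ∈ 𝒮 one has N ∩ M ∈ 𝒮 and there exists K ∈ 𝒮 with N ⊆ K, M ⊆ K, and {n + m : n ∈ N, m ∈ M} = K. Let E assign to each N ∈ 𝒮 a projection E(N) ∈ B such that for all N, M ∈ 𝒮: E(N)E(M) = E(N ∩ M); U(z)E(N) = E(N)U(z) for all z ∈ N; and E(N)U(z)E(N) = 0 for all z ∉ N. Then the closed linear span of {U(x)E(N)U(y) : x, y ∈ R, N ∈ 𝒮} in B is closed under multiplication; more precisely, the product of any two elements of the form U(x)E(N)U(y) and U(w)E(M)U(z) (x, y, w, z ∈ R, N, M ∈ 𝒮) is either 0 or of the form U(x + c)E(N ∩ M)U(d + z) with c ∈ N and d ∈ M and y + w = c + d. -/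
/-- The closed linear span of `{U(x) E(N) U(y)}` is closed under multiplication;
more precisely, a product of two such generators is either `0` or again of the
form `U(x + c) E(N ⊓ M) U(d + z)` with `c ∈ N`, `d ∈ M`, `y + w = c + d`. -/
theorem stmt_18 {B : Type*} [CStarAlgebra B] {R : Type*} [CommRing R]
    (U : R → B)
    (hU0 : U 0 = 1)
    (hUadd : ∀ x y : R, U (x + y) = U x * U y)
    (hUstar : ∀ x : R, star (U x) = U (-x))
    (𝒮 : Set (AddSubgroup R))
    (hinter : ∀ N ∈ 𝒮, ∀ M ∈ 𝒮, N ⊓ M ∈ 𝒮)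
    (hjoin : ∀ N ∈ 𝒮, ∀ M ∈ 𝒮, ∃ K ∈ 𝒮, N ≤ K ∧ M ≤ K ∧
      {z : R | ∃ n ∈ N, ∃ m ∈ M, z = n + m} = (K : Set R))
    (E : AddSubgroup R → B)
    (hproj : ∀ N ∈ 𝒮, star (E N) = E N ∧ E N * E N = E N)
    (hmul : ∀ N ∈ 𝒮, ∀ M ∈ 𝒮, E N * E M = E (N ⊓ M))
    (hcomm : ∀ N ∈ 𝒮, ∀ z ∈ N, U z * E N = E N * U z)
    (horth : ∀ N ∈ 𝒮, ∀ z : R, z ∉ N → E N * U z * E N = 0) :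
    (∀ a b : B,
        a ∈ (Submodule.span ℂ
          {b : B | ∃ (x y : R) (N : AddSubgroup R), N ∈ 𝒮 ∧
            b = U x * E N * U y}).topologicalClosure →
        b ∈ (Submodule.span ℂ
          {b : B | ∃ (x y : R) (N : AddSubgroup R), N ∈ 𝒮 ∧
            b = U x * E N * U y}).topologicalClosure →
        a * b ∈ (Submodule.span ℂ
          {b : B | ∃ (x y : R) (N : AddSubgroup R), N ∈ 𝒮 ∧
            b = U x * E N * U y}).topologicalClosure) ∧
      (∀ (x y w z : R) (N M : AddSubgroup R), N ∈ 𝒮 → M ∈ 𝒮 →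
        (U x * E N * U y) * (U w * E M * U z) = 0 ∨
          ∃ c ∈ N, ∃ d ∈ M, y + w = c + d ∧
            (U x * E N * U y) * (U w * E M * U z) =
              U (x + c) * E (N ⊓ M) * U (d + z)) := by

  classical
  set gens : Set B := {b : B | ∃ (x y : R) (N : AddSubgroup R), N ∈ 𝒮 ∧
      b = U x * E N * U y} with hgens
  have key : ∀ (x y w z : R) (N M : AddSubgroup R), N ∈ 𝒮 → M ∈ 𝒮 →
      (U x * E N * U y) * (U w * E M * U z) = 0 ∨
        ∃ c ∈ N, ∃ d ∈ M, y + w = c + d ∧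
          (U x * E N * U y) * (U w * E M * U z) =
            U (x + c) * E (N ⊓ M) * U (d + z) := by
    intro x y w z N M hN hM
    obtain ⟨K, hK, hNK, hMK, hset⟩ := hjoin N hN M hM
    have hfact : (U x * E N * U y) * (U w * E M * U z)
        = U x * (E N * U (y + w) * E M) * U z := by
      rw [hUadd]; simp only [mul_assoc]
    by_cases hyw : y + w ∈ K
    · right
      have hmem : y + w ∈ {z : R | ∃ n ∈ N, ∃ m ∈ M, z = n + m} := by
        rw [hset]; exact hyw
      obtain ⟨c, hc, d, hd, hcd⟩ := hmem
      refine ⟨c, hc, d, hd, hcd, ?_⟩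
      have e1 : E N * U (y + w) * E M = U c * E (N ⊓ M) * U d := by
        rw [hcd, hUadd]
        calc E N * (U c * U d) * E M
            = (E N * U c) * (U d * E M) := by simp only [mul_assoc]
          _ = (U c * E N) * (E M * U d) := by
              rw [← hcomm N hN c hc, hcomm M hM d hd]
          _ = U c * (E N * E M) * U d := by simp only [mul_assoc]
          _ = U c * E (N ⊓ M) * U d := by rw [hmul N hN M hM]
      rw [hfact, e1, hUadd x c, hUadd d z]
      simp only [mul_assoc]
    · left
      have hENK : E N * E K = E N := by
        rw [hmul N hN K hK, inf_eq_left.mpr hNK]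
      have hEKM : E K * E M = E M := by
        rw [hmul K hK M hM, inf_eq_right.mpr hMK]
      have h0 : E N * U (y + w) * E M = 0 := by
        calc E N * U (y + w) * E M
            = (E N * E K) * U (y + w) * (E K * E M) := by rw [hENK, hEKM]
          _ = E N * (E K * U (y + w) * E K) * E M := by simp only [mul_assoc]
          _ = 0 := by rw [horth K hK (y + w) hyw]; simp
      rw [hfact, h0]; simp
  refine ⟨?_, key⟩
  intro a b ha hb
  set S : Submodule ℂ B := Submodule.span ℂ gens with hS
  have prodS : ∀ p ∈ S, ∀ q ∈ S, p * q ∈ S := by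
    have hle : S * S ≤ S := by
      rw [hS, Submodule.span_mul_span]
      refine Submodule.span_le.mpr ?_
      rintro t ⟨p, hp, q, hq, rfl⟩
      show p * q ∈ Submodule.span ℂ gens
      obtain ⟨x, y, N, hN, rfl⟩ := hp
      obtain ⟨w', z', M, hM, rfl⟩ := hq
      rcases key x y w' z' N M hN hM with h | ⟨c, hc, d, hd, _, h⟩
      · rw [h]; exact zero_mem _
      · rw [h]
        exact Submodule.subset_span ⟨x + c, d + z', N ⊓ M, hinter N hN M hM, rfl⟩
    intro p hp q hq
    exact hle (Submodule.mul_mem_mul hp hq)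
  have ha' : a ∈ closure (S : Set B) := ha
  have hb' : b ∈ closure (S : Set B) := hb
  have cont1 : ∀ p ∈ (S : Set B), p * b ∈ closure (S : Set B) := by
    intro p hp
    exact map_mem_closure (continuous_mul_left p) hb'
      (fun q hq => prodS p hp q hq)
  have : a * b ∈ closure (closure (S : Set B)) :=
    map_mem_closure (f := fun p => p * b) (continuous_mul_right b) ha' cont1
  rw [closure_closure] at this
  exact this
end
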